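/- Let n ≥ 3, i ∈ [n-2], and let w = w_1w_2⋯w_n ∈ B_n with w_n = n-1, w_i = -n, {w_1,…,w_{i-1}} = {-(n-2), -(n-3), …, -(n-i)}, and {w_{i+1},…,w_{n-1}} = {-(n-i-1), …, -2, -1}. Then for every u ≤_L w, either (u_n = n-1 and u_i = -n), or (u_n = n and u ≤_L s_{n-1}w). -/

import Mathlib

/-- `w : Equiv.Perm ℤ` is the natural embedding of a signed permutation of `{±1,…,±n}`:
it anticommutes with negation and fixes every integer of absolute value greater than `n`. -/
def IsSignedPerm (n : ℕ) (w : Equiv.Perm ℤ) : Prop :=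
  (∀ i : ℤ, w (-i) = -(w i)) ∧ ∀ i : ℤ, (n : ℤ) < |i| → w i = i

/-- `Neg(w)` : the set of `i ∈ [n]` with `w_i < 0`. -/
noncomputable def NegSet (n : ℕ) (w : Equiv.Perm ℤ) : Finset ℤ :=
  (Finset.Icc 1 (n : ℤ)).filter fun i => w i < 0

/-- `Inv(w)` : the set of pairs `1 ≤ i < j ≤ n` with `w_i > w_j`. -/
noncomputable def InvSet (n : ℕ) (w : Equiv.Perm ℤ) : Finset (ℤ × ℤ) :=
  ((Finset.Icc 1 (n : ℤ)) ×ˢ (Finset.Icc 1 (n : ℤ))).filter fun p => p.1 < p.2 ∧ w p.2 < w p.1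

/-- `Nsp(w)` : the set of pairs `1 ≤ i < j ≤ n` with `w_i + w_j < 0`. -/
noncomputable def NspSet (n : ℕ) (w : Equiv.Perm ℤ) : Finset (ℤ × ℤ) :=
  ((Finset.Icc 1 (n : ℤ)) ×ˢ (Finset.Icc 1 (n : ℤ))).filter fun p => p.1 < p.2 ∧ w p.1 + w p.2 < 0

/-- The Coxeter length `ℓ(w) = #Neg(w) + #Inv(w) + #Nsp(w)` of `w ∈ B_n`. -/
noncomputable def len (n : ℕ) (w : Equiv.Perm ℤ) : ℕ :=
  (NegSet n w).card + (InvSet n w).card + (NspSet n w).card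

/-- Left weak order on `B_n` : `u ≤_L w` iff `ℓ(w) = ℓ(u) + ℓ(w u⁻¹)`. -/
def leL (n : ℕ) (u w : Equiv.Perm ℤ) : Prop := len n w = len n u + len n (w * u⁻¹)

/-- Right weak order on `B_n` : `u ≤_R w` iff `ℓ(w) = ℓ(u) + ℓ(u⁻¹ w)`. -/
def leR (n : ℕ) (u w : Equiv.Perm ℤ) : Prop := len n w = len n u + len n (u⁻¹ * w)

/-- `StsEqPat a p` : the signed standardization of the word `a` has one-line notation `p`. -/
def StsEqPat {m : ℕ} (a p : Fin m → ℤ) : Prop :=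
  (∀ t, (a t < 0 ↔ p t < 0)) ∧ ∀ s t, (|a s| < |a t| ↔ |p s| < |p t|)

/-- `StEqPat a p` : the ordinary standardization of the word `a` has one-line notation `p`. -/
def StEqPat {m : ℕ} (a p : Fin m → ℤ) : Prop := ∀ s t, a s < a t ↔ p s < p t

/-- The word `a` contains the signed pattern with one-line notation `p`. -/
def WordContainsPat {k m : ℕ} (a : Fin k → ℤ) (p : Fin m → ℤ) : Prop :=
  ∃ idx : Fin m → Fin k, StrictMono idx ∧ StsEqPat (a ∘ idx) p

/-- The word `a` contains the ordinary pattern with one-line notation `p`. -/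
def WordContainsStPat {k m : ℕ} (a : Fin k → ℤ) (p : Fin m → ℤ) : Prop :=
  ∃ idx : Fin m → Fin k, StrictMono idx ∧ StEqPat (a ∘ idx) p

/-- Word-level separability in the signed sense: the word avoids the six patterns
`(-2)1, 2(-1), 3142, 2413, (-3)(-1)(-4)(-2), (-2)(-4)(-1)(-3)`. -/
def SepWordSigned {k : ℕ} (a : Fin k → ℤ) : Prop :=
  ¬ WordContainsPat a ![-2, 1] ∧ ¬ WordContainsPat a ![2, -1] ∧
  ¬ WordContainsPat a ![3, 1, 4, 2] ∧ ¬ WordContainsPat a ![2, 4, 1, 3] ∧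
  ¬ WordContainsPat a ![-3, -1, -4, -2] ∧ ¬ WordContainsPat a ![-2, -4, -1, -3]

/-- Word-level separability in the ordinary sense: the word avoids `3142` and `2413`. -/
def SepWordOrd {k : ℕ} (a : Fin k → ℤ) : Prop :=
  ¬ WordContainsStPat a ![3, 1, 4, 2] ∧ ¬ WordContainsStPat a ![2, 4, 1, 3]

/-- The one-line notation `w_1 w_2 ⋯ w_n` of `w ∈ B_n`. -/
def oneLine (n : ℕ) (w : Equiv.Perm ℤ) : Fin n → ℤ := fun t => w ((t : ℤ) + 1)

/-- `w ∈ B_n` is separable. -/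
def SepSigned (n : ℕ) (w : Equiv.Perm ℤ) : Prop := SepWordSigned (oneLine n w)

/-- `w ∈ B_n` is minimal non-separable: `w` is not separable but for every
`i ∈ {0,…,n-1}` both `sts(w_1⋯w_i)` and `st(w_{i+1}⋯w_n)` are separable. -/
def MinNonSep (n : ℕ) (w : Equiv.Perm ℤ) : Prop :=
  ¬ SepSigned n w ∧
    ∀ i : ℕ, i ≤ n - 1 →
      SepWordSigned (fun t : Fin i => w ((t : ℤ) + 1)) ∧
      SepWordOrd (fun t : Fin (n - i) => w ((i : ℤ) + (t : ℤ) + 1))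

/-- The set `B_n` of signed permutations inside `Equiv.Perm ℤ`. -/
def SignedPerms (n : ℕ) : Set (Equiv.Perm ℤ) := {w | IsSignedPerm n w}

/-- The interval `[e,w]_L` in the left weak order on `B_n`. -/
def IntervalL (n : ℕ) (w : Equiv.Perm ℤ) : Set (Equiv.Perm ℤ) :=
  {x | IsSignedPerm n x ∧ leL n x w}

/-- The interval `[e,w]_R` in the right weak order on `B_n`. -/
def IntervalR (n : ℕ) (w : Equiv.Perm ℤ) : Set (Equiv.Perm ℤ) :=
  {x | IsSignedPerm n x ∧ leR n x w}

/-- `(X, Y)` is a splitting of `B_n` : multiplication `X × Y → B_n` is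
length-additive and a bijection. -/
def IsSplitting (n : ℕ) (X Y : Set (Equiv.Perm ℤ)) : Prop :=
  (∀ x ∈ X, ∀ y ∈ Y, len n (x * y) = len n x + len n y) ∧
  Set.BijOn (fun p : Equiv.Perm ℤ × Equiv.Perm ℤ => p.1 * p.2) (X ×ˢ Y) (SignedPerms n)

/-- The generalized quotient `B_n / U`. -/
def GenQuot (n : ℕ) (U : Set (Equiv.Perm ℤ)) : Set (Equiv.Perm ℤ) :=
  {w | IsSignedPerm n w ∧ ∀ x ∈ U, len n (w * x) = len n w + len n x}

/-- Number of elements of `[e,w]_L` of length `d`. -/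
noncomputable def rankCountL (n : ℕ) (w : Equiv.Perm ℤ) (d : ℕ) : ℕ :=
  {u | u ∈ IntervalL n w ∧ len n u = d}.ncard

/-- Number of elements of `[e,w]_R` of length `d`. -/
noncomputable def rankCountR (n : ℕ) (w : Equiv.Perm ℤ) (d : ℕ) : ℕ :=
  {u | u ∈ IntervalR n w ∧ len n u = d}.ncard

/-- Number of elements `u` with `w ≤_L u` and `ℓ(u) = ℓ(w) + d`. -/
noncomputable def rankCountUp (n : ℕ) (w : Equiv.Perm ℤ) (d : ℕ) : ℕ :=
  {u | IsSignedPerm n u ∧ leL n w u ∧ len n u = len n w + d}.ncard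

/-- The simple generators of `B_n` : `sGen 0 = s_0` interchanges `1` and `-1`, and for
`j ≥ 1`, `sGen j = s_j` interchanges `j, j+1` and `-j, -(j+1)`. -/
def sGen (j : ℕ) : Equiv.Perm ℤ :=
  if j = 0 then Equiv.swap 1 (-1)
  else Equiv.swap (j : ℤ) ((j : ℤ) + 1) * Equiv.swap (-(j : ℤ)) (-((j : ℤ) + 1))

/-- A sequence `f 0, f 1, …` is unimodal. -/
def UnimodalSeq (f : ℕ → ℕ) : Prop :=
  ∃ m, (∀ d e, d ≤ e → e ≤ m → f d ≤ f e) ∧ ∀ d e, m ≤ d → d ≤ e → f e ≤ f d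

/-- The rank generating function of `[e,w]_L`. -/
noncomputable def lowerGF (n : ℕ) (w : Equiv.Perm ℤ) : Polynomial ℕ :=
  ∑ d ∈ Finset.range (len n w + 1), Polynomial.C (rankCountL n w d) * Polynomial.X ^ d

/-- The rank generating function of `[w,w₀]_L`, shifted by `q^{-ℓ(w)}`. -/
noncomputable def upperGF (n : ℕ) (w : Equiv.Perm ℤ) : Polynomial ℕ :=
  ∑ d ∈ Finset.range (n * n + 1), Polynomial.C (rankCountUp n w d) * Polynomial.X ^ d

namespace SignedAux

/-- Positive roots of `B_n` encoded as pairs `(p,q)` with `1 ≤ q ≤ n`, `-q < p < q`: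
`(0,q) ↔ e_q`, `(p,q) with p>0 ↔ e_q - e_p`, `(-p,q) with p>0 ↔ e_q + e_p`. -/
noncomputable def Proots (n : ℕ) : Finset (ℤ × ℤ) :=
  ((Finset.Icc (-(n:ℤ)) (n:ℤ)) ×ˢ (Finset.Icc (1:ℤ) (n:ℤ))).filter fun r => -r.2 < r.1 ∧ r.1 < r.2

/-- Inversion set of `v`: roots `(p,q)` with `v q < v p`. -/
noncomputable def Nset (n : ℕ) (v : Equiv.Perm ℤ) : Finset (ℤ × ℤ) :=
  (Proots n).filter fun r => v r.2 < v r.1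

lemma mem_Proots {n : ℕ} {p q : ℤ} :
    (p, q) ∈ Proots n ↔ 1 ≤ q ∧ q ≤ (n:ℤ) ∧ -q < p ∧ p < q := by
  simp only [Proots, Finset.mem_filter, Finset.mem_product, Finset.mem_Icc]
  omega

lemma mem_Nset {n : ℕ} {v : Equiv.Perm ℤ} {r : ℤ × ℤ} :
    r ∈ Nset n v ↔ r ∈ Proots n ∧ v r.2 < v r.1 := Finset.mem_filter

lemma Nset_subset {n : ℕ} {v : Equiv.Perm ℤ} : Nset n v ⊆ Proots n :=
  Finset.filter_subset _ _

lemma sp_zero {n : ℕ} {w : Equiv.Perm ℤ} (h : IsSignedPerm n w) : w 0 = 0 := by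
  have := h.1 0; simp at this; omega

lemma sp_bound {n : ℕ} {w : Equiv.Perm ℤ} (h : IsSignedPerm n w) {z : ℤ} (hz : |z| ≤ n) :
    |w z| ≤ n := by
  by_contra hc
  have h2 : w (w z) = w z := h.2 _ (by omega)
  have h3 := w.injective h2
  rw [h3] at hc
  exact hc hz

lemma sp_inv {n : ℕ} {w : Equiv.Perm ℤ} (h : IsSignedPerm n w) : IsSignedPerm n w⁻¹ := by
  constructor
  · intro z
    apply w.injective
    rw [Equiv.Perm.inv_def, Equiv.apply_symm_apply, h.1, Equiv.apply_symm_apply]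
  · intro z hz
    have h2 := h.2 z hz
    calc w⁻¹ z = w⁻¹ (w z) := by rw [h2]
    _ = z := w.symm_apply_apply z

lemma sp_mul {n : ℕ} {x y : Equiv.Perm ℤ} (hx : IsSignedPerm n x) (hy : IsSignedPerm n y) :
    IsSignedPerm n (x * y) := by
  constructor
  · intro z
    simp only [Equiv.Perm.mul_apply, hy.1, hx.1]
  · intro z hz
    simp only [Equiv.Perm.mul_apply, hy.2 z hz, hx.2 z hz]

lemma sp_abs_ne {n : ℕ} {y : Equiv.Perm ℤ} (hy : IsSignedPerm n y) {p q : ℤ}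
    (h1 : p ≠ q) (h2 : p ≠ -q) : |y p| ≠ |y q| := by
  intro e
  rcases abs_eq_abs.mp e with e | e
  · exact h1 (y.injective e)
  · have : y p = y (-q) := by rw [hy.1]; exact e
    exact h2 (y.injective this)

/-- Normalization of a pair to the canonical positive-root representative. -/
def rho (a b : ℤ) : ℤ × ℤ :=
  if |a| < |b| then (if 0 < b then (a, b) else (-a, -b))
  else (if 0 < a then (b, a) else (-b, -a))

def Phi (y : Equiv.Perm ℤ) (r : ℤ × ℤ) : ℤ × ℤ := rho (y r.1) (y r.2)

lemma rho_branches (a b : ℤ) (h : |a| ≠ |b|) :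
    (rho a b = (a, b) ∧ |a| < b) ∨ (rho a b = (-a, -b) ∧ |a| < -b) ∨
    (rho a b = (b, a) ∧ |b| < a) ∨ (rho a b = (-b, -a) ∧ |b| < -a) := by
  have ha := abs_cases a
  have hb := abs_cases b
  unfold rho
  split_ifs with h1 h2 h2
  · exact Or.inl ⟨rfl, by rcases ha with ⟨e1, e2⟩ | ⟨e1, e2⟩ <;>
      rcases hb with ⟨f1, f2⟩ | ⟨f1, f2⟩ <;> omega⟩
  · exact Or.inr (Or.inl ⟨rfl, by rcases ha with ⟨e1, e2⟩ | ⟨e1, e2⟩ <;>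
      rcases hb with ⟨f1, f2⟩ | ⟨f1, f2⟩ <;> omega⟩)
  · exact Or.inr (Or.inr (Or.inl ⟨rfl, by rcases ha with ⟨e1, e2⟩ | ⟨e1, e2⟩ <;>
      rcases hb with ⟨f1, f2⟩ | ⟨f1, f2⟩ <;> omega⟩))
  · exact Or.inr (Or.inr (Or.inr ⟨rfl, by rcases ha with ⟨e1, e2⟩ | ⟨e1, e2⟩ <;>
      rcases hb with ⟨f1, f2⟩ | ⟨f1, f2⟩ <;> omega⟩))

lemma rho_eval {p q : ℤ} (h1 : -q < p) (h2 : p < q) :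
    rho p q = (p, q) ∧ rho (-p) (-q) = (p, q) ∧ rho q p = (p, q) ∧ rho (-q) (-p) = (p, q) := by
  have hq : 0 < q := by omega
  have habs : |p| < |q| := by
    rcases abs_cases p with ⟨e1, e2⟩ | ⟨e1, e2⟩ <;> rcases abs_cases q with ⟨f1, f2⟩ | ⟨f1, f2⟩ <;>
      omega
  refine ⟨?_, ?_, ?_, ?_⟩
  · unfold rho; rw [if_pos habs, if_pos hq]
  · unfold rho; simp only [abs_neg]; rw [if_pos habs, if_neg (by omega), neg_neg, neg_neg]
  · unfold rho; rw [if_neg (by omega), if_pos hq]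
  · unfold rho; simp only [abs_neg]; rw [if_neg (by omega), if_neg (by omega), neg_neg, neg_neg]


lemma Phi_mem {n : ℕ} {y : Equiv.Perm ℤ} (hy : IsSignedPerm n y) {p q : ℤ}
    (h : (p, q) ∈ Proots n) : Phi y (p, q) ∈ Proots n := by
  rw [mem_Proots] at h
  have hp := abs_le.mp (sp_bound hy (z := p)
    (by rcases abs_cases p with ⟨e1, e2⟩ | ⟨e1, e2⟩ <;> omega))
  have hq := abs_le.mp (sp_bound hy (z := q)
    (by rcases abs_cases q with ⟨e1, e2⟩ | ⟨e1, e2⟩ <;> omega))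
  have hab : |y p| ≠ |y q| := sp_abs_ne hy (by omega) (by omega)
  show rho (y p) (y q) ∈ Proots n
  have ha := abs_cases (y p)
  have hb := abs_cases (y q)
  rcases rho_branches (y p) (y q) hab with ⟨he, hl⟩ | ⟨he, hl⟩ | ⟨he, hl⟩ | ⟨he, hl⟩ <;>
    rw [he, mem_Proots] <;>
    rcases ha with ⟨e1, e2⟩ | ⟨e1, e2⟩ <;> rcases hb with ⟨f1, f2⟩ | ⟨f1, f2⟩ <;> omega

lemma Phi_left_inv {n : ℕ} {y : Equiv.Perm ℤ} (hy : IsSignedPerm n y) {p q : ℤ}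
    (h : (p, q) ∈ Proots n) : Phi y⁻¹ (Phi y (p, q)) = (p, q) := by
  rw [mem_Proots] at h
  have hab : |y p| ≠ |y q| := sp_abs_ne hy (by omega) (by omega)
  have hinv := sp_inv hy
  have h1 : y⁻¹ (y p) = p := y.symm_apply_apply p
  have h2 : y⁻¹ (y q) = q := y.symm_apply_apply q
  have h1' : y⁻¹ (-(y p)) = -p := by rw [hinv.1, h1]
  have h2' : y⁻¹ (-(y q)) = -q := by rw [hinv.1, h2]
  have hev := rho_eval (p := p) (q := q) h.2.2.1 h.2.2.2
  rcases rho_branches (y p) (y q) hab with ⟨he, _⟩ | ⟨he, _⟩ | ⟨he, _⟩ | ⟨he, _⟩ <;>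
    · show Phi y⁻¹ (rho (y p) (y q)) = (p, q)
      rw [he]
      show rho (y⁻¹ _) (y⁻¹ _) = (p, q)
      first
      | (rw [h1, h2]; exact hev.1)
      | (rw [h1', h2']; exact hev.2.1)
      | (rw [h2, h1]; exact hev.2.2.1)
      | (rw [h2', h1']; exact hev.2.2.2)

lemma xor_key {n : ℕ} {x : Equiv.Perm ℤ} (hx : IsSignedPerm n x) {a b : ℤ}
    (hab : |a| ≠ |b|) :
    (x b < x a ↔ ¬ ((b < a) ↔ (x (rho a b).2 < x (rho a b).1))) := by
  have hne : a ≠ b := by intro e; rw [e] at hab; exact hab rfl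
  have hxab : x a ≠ x b := fun e => hne (x.injective e)
  have hna := hx.1 a
  have hnb := hx.1 b
  have ha := abs_cases a
  have hb := abs_cases b
  rcases rho_branches a b hab with ⟨he, hl⟩ | ⟨he, hl⟩ | ⟨he, hl⟩ | ⟨he, hl⟩ <;> rw [he] <;>
    simp only [] <;>
    rcases ha with ⟨e1, e2⟩ | ⟨e1, e2⟩ <;> rcases hb with ⟨f1, f2⟩ | ⟨f1, f2⟩ <;> omega

lemma len_eq_card {n : ℕ} {w : Equiv.Perm ℤ} (h : IsSignedPerm n w) :
    len n w = (Nset n w).card := by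
  classical
  have h0 : w 0 = 0 := sp_zero h
  have e1 : ((Nset n w).filter fun r => ¬ r.1 = 0).filter (fun r => 0 < r.1)
      = (Nset n w).filter fun r => 0 < r.1 := by
    rw [Finset.filter_filter]
    apply Finset.filter_congr
    intro r _
    constructor
    · rintro ⟨_, h2⟩; exact h2
    · intro h2; exact ⟨by omega, h2⟩
  have e2 : ((Nset n w).filter fun r => ¬ r.1 = 0).filter (fun r => ¬ 0 < r.1)
      = (Nset n w).filter fun r => r.1 < 0 := by
    rw [Finset.filter_filter]
    apply Finset.filter_congr
    intro r _
    constructor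
    · rintro ⟨h1, h2⟩; omega
    · intro h2; exact ⟨by omega, by omega⟩
  have hsplit : (Nset n w).card
      = ((Nset n w).filter fun r => r.1 = 0).card
        + (((Nset n w).filter fun r => 0 < r.1).card
          + ((Nset n w).filter fun r => r.1 < 0).card) := by
    rw [← e1, ← e2]
    rw [Finset.card_filter_add_card_filter_not (p := fun r : ℤ × ℤ => 0 < r.1)]
    rw [Finset.card_filter_add_card_filter_not (p := fun r : ℤ × ℤ => r.1 = 0)]
  have c0 : ((Nset n w).filter fun r => r.1 = 0).card = (NegSet n w).card := by
    refine Finset.card_bij' (fun r _ => r.2) (fun q _ => ((0 : ℤ), q)) ?_ ?_ ?_ ?_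
    · intro r hr
      simp only [Finset.mem_filter, mem_Nset, mem_Proots] at hr
      obtain ⟨⟨hP, hlt⟩, hz⟩ := hr
      obtain ⟨p, q⟩ := r
      simp only at hz
      subst hz
      rw [h0] at hlt
      rw [mem_Proots] at hP
      simp only [NegSet, Finset.mem_filter, Finset.mem_Icc]
      exact ⟨⟨hP.1, hP.2.1⟩, hlt⟩
    · intro q hq
      simp only [NegSet, Finset.mem_filter, Finset.mem_Icc] at hq
      simp only [Finset.mem_filter, mem_Nset, mem_Proots]
      exact ⟨⟨by omega, by rw [h0]; exact hq.2⟩, trivial⟩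
    · intro r hr
      simp only [Finset.mem_filter] at hr
      exact Prod.ext (by simp [hr.2]) rfl
    · intro q _
      rfl
  have cInv : ((Nset n w).filter fun r => 0 < r.1) = InvSet n w := by
    ext r
    obtain ⟨p, q⟩ := r
    simp only [Finset.mem_filter, mem_Nset, mem_Proots, InvSet, Finset.mem_product,
      Finset.mem_Icc]
    constructor
    · rintro ⟨⟨hP, hlt⟩, hz⟩
      exact ⟨⟨⟨by omega, by omega⟩, ⟨by omega, by omega⟩⟩, by omega, hlt⟩
    · rintro ⟨⟨⟨h1, h2⟩, h3, h4⟩, h5, h6⟩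
      exact ⟨⟨⟨by omega, by omega, by omega, by omega⟩, h6⟩, by omega⟩
  have cNsp : ((Nset n w).filter fun r => r.1 < 0).card = (NspSet n w).card := by
    refine Finset.card_bij' (fun r _ => (-r.1, r.2)) (fun r _ => (-r.1, r.2)) ?_ ?_ ?_ ?_
    · intro r hr
      obtain ⟨p, q⟩ := r
      simp only [Finset.mem_filter, mem_Nset, mem_Proots] at hr
      obtain ⟨⟨hP, hlt⟩, hz⟩ := hr
      simp only at hz hlt ⊢
      have hneg := h.1 p
      simp only [NspSet, Finset.mem_filter, Finset.mem_product, Finset.mem_Icc]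
      refine ⟨⟨⟨by omega, by omega⟩, ⟨by omega, by omega⟩⟩, by omega, by omega⟩
    · intro r hr
      obtain ⟨p, q⟩ := r
      simp only [NspSet, Finset.mem_filter, Finset.mem_product, Finset.mem_Icc] at hr
      simp only at hr ⊢
      have hneg := h.1 p
      simp only [Finset.mem_filter, mem_Nset, mem_Proots]
      refine ⟨⟨by omega, by omega⟩, by omega⟩
    · intro r _
      simp
    · intro r _
      simp
  rw [hsplit, c0, cInv, cNsp]
  unfold len
  omega

lemma main_xor {n : ℕ} {u w : Equiv.Perm ℤ} (hu : IsSignedPerm n u) (hw : IsSignedPerm n w)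
    {p q : ℤ} (hP : (p, q) ∈ Proots n) :
    ((p, q) ∈ Nset n w ↔ ¬ (((p, q) ∈ Nset n u) ↔ (Phi u (p, q) ∈ Nset n (w * u⁻¹)))) := by
  have hx : IsSignedPerm n (w * u⁻¹) := sp_mul hw (sp_inv hu)
  have hP' := mem_Proots.mp hP
  have hab : |u p| ≠ |u q| := sp_abs_ne hu (by omega) (by omega)
  have hk := xor_key hx hab
  have hxu1 : (w * u⁻¹) (u p) = w p := by
    simp only [Equiv.Perm.mul_apply, Equiv.Perm.inv_def, Equiv.symm_apply_apply]
  have hxu2 : (w * u⁻¹) (u q) = w q := by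
    simp only [Equiv.Perm.mul_apply, Equiv.Perm.inv_def, Equiv.symm_apply_apply]
  rw [hxu1, hxu2] at hk
  have hPhiP : Phi u (p, q) ∈ Proots n := Phi_mem hu hP
  rw [mem_Nset, mem_Nset, mem_Nset]
  simp only [hP, hPhiP, true_and]
  exact hk

lemma key_count {n : ℕ} {u w : Equiv.Perm ℤ} (hu : IsSignedPerm n u) (hw : IsSignedPerm n w) :
    (Nset n w).card + 2 * ((Nset n u) \ (Nset n w)).card
      = (Nset n u).card + (Nset n (w * u⁻¹)).card := by
  classical
  have himg : (Nset n (w * u⁻¹))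
      = ((Nset n u \ Nset n w) ∪ (Nset n w \ Nset n u)).image (Phi u) := by
    ext s
    simp only [Finset.mem_image, Finset.mem_union, Finset.mem_sdiff]
    constructor
    · intro hs
      have hsP : s ∈ Proots n := Nset_subset hs
      obtain ⟨sp, sq⟩ := s
      have hrP : Phi u⁻¹ (sp, sq) ∈ Proots n := Phi_mem (sp_inv hu) hsP
      have hfix : Phi u (Phi u⁻¹ (sp, sq)) = (sp, sq) := by
        have := Phi_left_inv (sp_inv hu) (p := sp) (q := sq) hsP
        rwa [inv_inv] at this
      obtain ⟨⟨p, q⟩, hPQ⟩ : ∃ r : ℤ × ℤ, Phi u⁻¹ (sp, sq) = r := ⟨_, rfl⟩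
      rw [hPQ] at hrP hfix
      have hxor := main_xor hu hw (p := p) (q := q) hrP
      rw [hfix] at hxor
      refine ⟨(p, q), ?_, hfix⟩
      by_cases hNu : (p, q) ∈ Nset n u
      · exact Or.inl ⟨hNu, fun hNw => (hxor.mp hNw) (iff_of_true hNu hs)⟩
      · exact Or.inr ⟨hxor.mpr (fun hiff => hNu (hiff.mpr hs)), hNu⟩
    · rintro ⟨r, hr, rfl⟩
      obtain ⟨p, q⟩ := r
      have hrP : (p, q) ∈ Proots n := by
        rcases hr with ⟨h1, _⟩ | ⟨h1, _⟩ <;> exact Nset_subset h1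
      have hxor := main_xor hu hw (p := p) (q := q) hrP
      rcases hr with ⟨h1, h2⟩ | ⟨h1, h2⟩
      · have h3 : ((p, q) ∈ Nset n u ↔ Phi u (p, q) ∈ Nset n (w * u⁻¹)) := by
          by_contra hc
          exact h2 (hxor.mpr hc)
        exact h3.mp h1
      · by_contra hc
        exact (hxor.mp h1) (iff_of_false h2 hc)
  have hinj : Set.InjOn (Phi u) ((Nset n u \ Nset n w ∪ Nset n w \ Nset n u) : Finset (ℤ × ℤ)) := by
    intro r hr r' hr' he
    simp only [Finset.coe_union, Finset.coe_sdiff, Set.mem_union, Set.mem_diff,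
      Finset.mem_coe] at hr hr'
    have hrP : r ∈ Proots n := by
      rcases hr with ⟨h1, _⟩ | ⟨h1, _⟩ <;> exact Nset_subset h1
    have hrP' : r' ∈ Proots n := by
      rcases hr' with ⟨h1, _⟩ | ⟨h1, _⟩ <;> exact Nset_subset h1
    obtain ⟨p, q⟩ := r
    obtain ⟨p', q'⟩ := r'
    have e1 := Phi_left_inv hu (p := p) (q := q) hrP
    have e2 := Phi_left_inv hu (p := p') (q := q') hrP'
    rw [← e1, ← e2, he]
  have hcard := Finset.card_image_of_injOn hinj
  rw [himg, hcard]
  have hdisj : Disjoint (Nset n u \ Nset n w) (Nset n w \ Nset n u) := by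
    rw [Finset.disjoint_left]
    intro a ha hb
    rw [Finset.mem_sdiff] at ha hb
    exact hb.2 ha.1
  rw [Finset.card_union_of_disjoint hdisj]
  have h1 := Finset.card_sdiff_add_card_inter (Nset n u) (Nset n w)
  have h2 := Finset.card_sdiff_add_card_inter (Nset n w) (Nset n u)
  have h3 : (Nset n u ∩ Nset n w).card = (Nset n w ∩ Nset n u).card := by
    rw [Finset.inter_comm]
  omega

lemma leL_iff {n : ℕ} {u w : Equiv.Perm ℤ} (hu : IsSignedPerm n u) (hw : IsSignedPerm n w) :
    leL n u w ↔ Nset n u ⊆ Nset n w := by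
  have hkey := key_count hu hw
  unfold leL
  rw [len_eq_card hw, len_eq_card hu, len_eq_card (sp_mul hw (sp_inv hu))]
  constructor
  · intro h
    have hc : ((Nset n u) \ (Nset n w)).card = 0 := by omega
    have he := Finset.card_eq_zero.mp hc
    exact Finset.sdiff_eq_empty_iff_subset.mp he
  · intro h
    have he : (Nset n u) \ (Nset n w) = ∅ := Finset.sdiff_eq_empty_iff_subset.mpr h
    rw [he] at hkey
    simp at hkey
    omega

lemma sGen_apply {n : ℕ} (hn : 3 ≤ n) (c : ℤ) :
    sGen (n - 1) c = if c = (n : ℤ) - 1 then (n : ℤ) else if c = (n : ℤ) then (n : ℤ) - 1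
      else if c = -((n : ℤ) - 1) then -(n : ℤ) else if c = -(n : ℤ) then -((n : ℤ) - 1) else c := by
  have h1 : ((n - 1 : ℕ) : ℤ) = (n : ℤ) - 1 := by omega
  unfold sGen
  rw [if_neg (by omega)]
  rw [h1]
  have h2 : (n : ℤ) - 1 + 1 = (n : ℤ) := by omega
  rw [h2]
  simp only [Equiv.Perm.mul_apply, Equiv.swap_apply_def]
  split_ifs <;> omega

lemma sGen_signed {n : ℕ} (hn : 3 ≤ n) : IsSignedPerm n (sGen (n - 1)) := by
  constructor
  · intro z
    rw [sGen_apply hn, sGen_apply hn]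
    split_ifs <;> omega
  · intro z hz
    rw [sGen_apply hn]
    rcases abs_cases z with ⟨e1, e2⟩ | ⟨e1, e2⟩ <;> split_ifs <;> omega

lemma sGen_lt_iff {n : ℕ} (hn : 3 ≤ n) {a b : ℤ} (hne : a ≠ b)
    (h1 : ¬(a = (n : ℤ) - 1 ∧ b = (n : ℤ))) (h2 : ¬(b = (n : ℤ) - 1 ∧ a = (n : ℤ)))
    (h3 : ¬(a = -(n : ℤ) ∧ b = -((n : ℤ) - 1))) (h4 : ¬(b = -(n : ℤ) ∧ a = -((n : ℤ) - 1))) :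
    (sGen (n - 1) a < sGen (n - 1) b ↔ a < b) := by
  rw [sGen_apply hn, sGen_apply hn]
  split_ifs <;> omega

end SignedAux

open SignedAux in
theorem lower_interval_dichotomy' (n : ℕ) (hn : 3 ≤ n) (i : ℕ) (hi1 : 1 ≤ i) (hi2 : i ≤ n - 2)
    (w : Equiv.Perm ℤ) (hw : IsSignedPerm n w)
    (hwn : w (n : ℤ) = (n : ℤ) - 1) (hwi : w (i : ℤ) = -(n : ℤ)) :
    ∀ u : Equiv.Perm ℤ, IsSignedPerm n u → leL n u w →
      (u (n : ℤ) = (n : ℤ) - 1 ∧ u (i : ℤ) = -(n : ℤ)) ∨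
      (u (n : ℤ) = (n : ℤ) ∧ leL n u (sGen (n - 1) * w)) := by
  intro u hu hle
  have hii : (1 : ℤ) ≤ (i : ℤ) ∧ (i : ℤ) ≤ (n : ℤ) - 2 := by omega
  have hwnegi : w (-(i : ℤ)) = (n : ℤ) := by
    have := hw.1 (i : ℤ)
    rw [hwi] at this
    omega
  have hwnegn : w (-(n : ℤ)) = -((n : ℤ) - 1) := by
    have := hw.1 (n : ℤ)
    rw [hwn] at this
    omega
  have hw0 : w 0 = 0 := sp_zero hw
  have hu0 : u 0 = 0 := sp_zero hu
  have hsub : Nset n u ⊆ Nset n w := (leL_iff hu hw).mp hle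
  -- helper: any root (p, n) in Nset n u forces p = -i
  have hNn : ∀ p : ℤ, -(n : ℤ) < p → p < (n : ℤ) → (p, (n : ℤ)) ∈ Nset n u → p = -(i : ℤ) := by
    intro p hp1 hp2 hmem
    have h2 := (mem_Nset.mp (hsub hmem)).2
    simp only at h2
    rw [hwn] at h2
    have hb := abs_le.mp (sp_bound hw (z := p)
      (by rcases abs_cases p with ⟨e1, e2⟩ | ⟨e1, e2⟩ <;> omega))
    have hbw := abs_le.mp (sp_bound hw (z := p) (by
      rcases abs_cases p with ⟨e1, e2⟩ | ⟨e1, e2⟩ <;> omega))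
    have hwp : w p = (n : ℤ) := by omega
    have : w p = w (-(i : ℤ)) := by rw [hwnegi, hwp]
    exact w.injective this
  have hmkP : ∀ p : ℤ, -(n : ℤ) < p → p < (n : ℤ) → (p, (n : ℤ)) ∈ Proots n := by
    intro p h1 h2
    rw [mem_Proots]
    omega
  have step1 : ∀ j : ℤ, 1 ≤ j → j ≤ (n : ℤ) - 1 → u j < u (n : ℤ) := by
    intro j h1 h2
    rcases lt_trichotomy (u j) (u (n : ℤ)) with h | h | h
    · exact h
    · exact absurd (u.injective h) (by omega)
    · have hm : (j, (n : ℤ)) ∈ Nset n u :=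
        mem_Nset.mpr ⟨hmkP j (by omega) (by omega), h⟩
      have := hNn j (by omega) (by omega) hm
      omega
  have step2 : 0 < u (n : ℤ) := by
    by_contra hc
    push_neg at hc
    have hne : u (n : ℤ) ≠ u 0 := fun e => by have := u.injective e; omega
    have hlt : u (n : ℤ) < u 0 := by omega
    have hm : ((0 : ℤ), (n : ℤ)) ∈ Nset n u :=
      mem_Nset.mpr ⟨hmkP 0 (by omega) (by omega), hlt⟩
    have := hNn 0 (by omega) (by omega) hm
    omega
  have hun_le : u (n : ℤ) ≤ (n : ℤ) := by
    have := abs_le.mp (sp_bound hu (z := (n : ℤ)) (by rw [abs_of_nonneg (by omega)]))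
    omega
  have step3 : (n : ℤ) - 1 ≤ u (n : ℤ) := by
    by_contra hc
    push_neg at hc
    -- position of value n-1
    have hut : u (u⁻¹ ((n : ℤ) - 1)) = (n : ℤ) - 1 := u.apply_symm_apply _
    have htb := abs_le.mp (sp_bound (sp_inv hu) (z := (n : ℤ) - 1)
      (by rw [abs_of_nonneg (by omega)]; omega))
    have ht0 : u⁻¹ ((n : ℤ) - 1) ≠ 0 := by
      intro e
      rw [e, hu0] at hut
      omega
    set t := u⁻¹ ((n : ℤ) - 1) with htdef
    rcases (by omega : t = (n : ℤ) ∨ (1 ≤ t ∧ t ≤ (n : ℤ) - 1) ∨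
        (-(n : ℤ) ≤ t ∧ t ≤ -1)) with h | h | h
    · rw [h] at hut; omega
    · have := step1 t h.1 h.2; omega
    · -- t < 0 : value -(n-1) sits at position -t ∈ [1,n]
      have hmt : u (-t) = -((n : ℤ) - 1) := by rw [hu.1, hut]
      rcases (by omega : t = -(n : ℤ) ∨ (-(n : ℤ) + 1 ≤ t ∧ t ≤ -1)) with h2 | h2
      · rw [h2, neg_neg] at hmt
        omega
      · have hm : (t, (n : ℤ)) ∈ Nset n u :=
          mem_Nset.mpr ⟨hmkP t (by omega) (by omega), by simp only; omega⟩
        have hti := hNn t (by omega) (by omega) hm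
        -- so t = -i and u i = -(n-1)
        have hui : u (i : ℤ) = -((n : ℤ) - 1) := by
          have h5 : u (-(i : ℤ)) = (n : ℤ) - 1 := by rw [← hti]; exact hut
          have h6 := hu.1 (i : ℤ)
          omega
        -- now locate value n
        have hut2 : u (u⁻¹ (n : ℤ)) = (n : ℤ) := u.apply_symm_apply _
        have htb2 := abs_le.mp (sp_bound (sp_inv hu) (z := (n : ℤ))
          (by rw [abs_of_nonneg (by omega)]))
        have ht02 : u⁻¹ (n : ℤ) ≠ 0 := by
          intro e
          rw [e, hu0] at hut2
          omega
        set t2 := u⁻¹ (n : ℤ) with ht2def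
        rcases (by omega : t2 = (n : ℤ) ∨ (1 ≤ t2 ∧ t2 ≤ (n : ℤ) - 1) ∨
            (-(n : ℤ) ≤ t2 ∧ t2 ≤ -1)) with h3 | h3 | h3
        · rw [h3] at hut2; omega
        · have := step1 t2 h3.1 h3.2; omega
        · have hmt2 : u (-t2) = -(n : ℤ) := by rw [hu.1, hut2]
          rcases (by omega : t2 = -(n : ℤ) ∨ (-(n : ℤ) + 1 ≤ t2 ∧ t2 ≤ -1)) with h4 | h4
          · rw [h4, neg_neg] at hmt2
            omega
          · have hm2 : (t2, (n : ℤ)) ∈ Nset n u :=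
              mem_Nset.mpr ⟨hmkP t2 (by omega) (by omega), by simp only; omega⟩
            have ht2i := hNn t2 (by omega) (by omega) hm2
            -- t2 = -i, so u i = -n, contradicting u i = -(n-1)
            have ht2i' : -t2 = (i : ℤ) := by omega
            rw [ht2i'] at hmt2
            omega
  rcases (by omega : u (n : ℤ) = (n : ℤ) - 1 ∨ u (n : ℤ) = (n : ℤ)) with hun | hun
  · -- case u_n = n-1 : show u i = -n
    left
    refine ⟨hun, ?_⟩
    have hut : u (u⁻¹ (-(n : ℤ))) = -(n : ℤ) := u.apply_symm_apply _
    have htb := abs_le.mp (sp_bound (sp_inv hu) (z := -(n : ℤ))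
      (by rw [abs_of_nonpos (by omega)]; omega))
    have ht0 : u⁻¹ (-(n : ℤ)) ≠ 0 := by
      intro e
      rw [e, hu0] at hut
      omega
    set t := u⁻¹ (-(n : ℤ)) with htdef
    rcases (by omega : t = (n : ℤ) ∨ t = -(n : ℤ) ∨ (1 ≤ t ∧ t ≤ (n : ℤ) - 1) ∨
        (-(n : ℤ) + 1 ≤ t ∧ t ≤ -1)) with h | h | h | h
    · rw [h] at hut; omega
    · rw [h] at hut
      have := hu.1 (n : ℤ)
      omega
    · -- t ∈ [1, n-1] : then (-t, n) ∈ Nset u forces t = i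
      have hmt : u (-t) = (n : ℤ) := by rw [hu.1, hut]; omega
      have hm : (-t, (n : ℤ)) ∈ Nset n u :=
        mem_Nset.mpr ⟨hmkP (-t) (by omega) (by omega), by simp only; omega⟩
      have := hNn (-t) (by omega) (by omega) hm
      have hti : t = (i : ℤ) := by omega
      rw [← hti]
      exact hut
    · -- t ∈ [-(n-1), -1] : u (-t) = n with -t ∈ [1, n-1], contradicting step1
      have hmt : u (-t) = (n : ℤ) := by rw [hu.1, hut]; omega
      have := step1 (-t) (by omega) (by omega)
      omega
  · -- case u_n = n
    right
    refine ⟨hun, ?_⟩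
    have hWs : IsSignedPerm n (sGen (n - 1) * w) := sp_mul (sGen_signed hn) hw
    rw [leL_iff hu hWs]
    intro r hr
    obtain ⟨p, q⟩ := r
    have hP : (p, q) ∈ Proots n := (mem_Nset.mp hr).1
    have hP' := mem_Proots.mp hP
    have hru : u q < u p := (mem_Nset.mp hr).2
    have hrw : w q < w p := (mem_Nset.mp (hsub hr)).2
    have hne_r : ¬(p = -(i : ℤ) ∧ q = (n : ℤ)) := by
      rintro ⟨rfl, rfl⟩
      have h1 := hu.1 (i : ℤ)
      have hb := abs_le.mp (sp_bound hu (z := (i : ℤ))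
        (by rw [abs_of_nonneg (by omega)]; omega))
      omega
    refine mem_Nset.mpr ⟨hP, ?_⟩
    show (sGen (n - 1)) (w q) < (sGen (n - 1)) (w p)
    have hgoal : (sGen (n - 1)) (w q) < (sGen (n - 1)) (w p) ↔ w q < w p := by
      apply sGen_lt_iff hn
      · exact fun e => (by have := w.injective e; omega : False)
      · rintro ⟨e1, e2⟩
        have hq : q = (n : ℤ) := w.injective (e1.trans hwn.symm)
        have hp : p = -(i : ℤ) := w.injective (e2.trans hwnegi.symm)
        exact hne_r ⟨hp, hq⟩
      · rintro ⟨e1, e2⟩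
        have hq : q = -(i : ℤ) := w.injective (e2.trans hwnegi.symm)
        omega
      · rintro ⟨e1, e2⟩
        have hq : q = (i : ℤ) := w.injective (e1.trans hwi.symm)
        have hp : p = -(n : ℤ) := w.injective (e2.trans hwnegn.symm)
        omega
      · rintro ⟨e1, e2⟩
        have hq : q = -(n : ℤ) := w.injective (e2.trans hwnegn.symm)
        omega
    exact hgoal.mpr hrw


/-- Structure of elements `u ≤_L w` for the special `w` with
`w_n = n-1`, `w_i = -n`, `{w_1,…,w_{i-1}} = {-(n-2),…,-(n-i)}` and
`{w_{i+1},…,w_{n-1}} = {-(n-i-1),…,-1}`. -/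
theorem lower_interval_dichotomy (n : ℕ) (hn : 3 ≤ n) (i : ℕ) (hi1 : 1 ≤ i) (hi2 : i ≤ n - 2)
    (w : Equiv.Perm ℤ) (hw : IsSignedPerm n w)
    (hwn : w (n : ℤ) = (n : ℤ) - 1) (hwi : w (i : ℤ) = -(n : ℤ))
    (hpre : (Finset.Icc (1 : ℤ) ((i : ℤ) - 1)).image (fun j => w j) =
      Finset.Icc (-((n : ℤ) - 2)) (-((n : ℤ) - (i : ℤ))))
    (hsuf : (Finset.Icc ((i : ℤ) + 1) ((n : ℤ) - 1)).image (fun j => w j) =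
      Finset.Icc (-((n : ℤ) - (i : ℤ) - 1)) (-1)) :
    ∀ u : Equiv.Perm ℤ, IsSignedPerm n u → leL n u w →
      (u (n : ℤ) = (n : ℤ) - 1 ∧ u (i : ℤ) = -(n : ℤ)) ∨
      (u (n : ℤ) = (n : ℤ) ∧ leL n u (sGen (n - 1) * w)) := by
  exact lower_interval_dichotomy' n hn i hi1 hi2 w hw hwn hwi
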